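/- Let Λ be a coherent frame. Then Λ has enough points in the following sense: for all a, b ∈ Λ with ¬ b ≤ a there exists a prime element p of Λ with a ≤ p and ¬ b ≤ p. Consequently, if a, b ∈ Λ satisfy (for every prime element p, a ≤ p if and only if b ≤ p), then a = b. -/

import Mathlib

/-!
If `b ≰ a`, compact generation yields a compact `c ≤ b` with `c ≰ a`. Since `c` is compact, the
elements not above `c` are closed under suprema of chains, so Zorn's lemma gives a maximal such
`p ≥ a`; distributivity makes `p` prime.
-/

open CompleteLattice

/-- An element `p` of a lattice with top is prime if `p ≠ ⊤` and
`x ⊓ y ≤ p` implies `x ≤ p` or `y ≤ p`. -/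
def IsPrimeElem {Λ : Type*} [Lattice Λ] [OrderTop Λ] (p : Λ) : Prop :=
  p ≠ ⊤ ∧ ∀ x y : Λ, x ⊓ y ≤ p → x ≤ p ∨ y ≤ p

theorem IsPrimeElem.of_maximal_not_le {Λ : Type*} [DistribLattice Λ] [OrderTop Λ] {c p : Λ}
    (hp : Maximal (fun x => ¬ c ≤ x) p) : IsPrimeElem p := by
  have hc_le_sup : ∀ x, ¬ x ≤ p → c ≤ p ⊔ x := fun x hxp => by
    by_contra hc
    exact hxp (le_sup_right.trans (hp.2 hc le_sup_left))
  refine ⟨fun hp_top => hp.1 (hp_top ▸ le_top), fun x y hxy => ?_⟩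
  by_contra! h
  apply hp.1
  calc c ≤ (p ⊔ x) ⊓ (p ⊔ y) := le_inf (hc_le_sup x h.1) (hc_le_sup y h.2)
    _ = p ⊔ x ⊓ y := sup_inf_left p x y |>.symm
    _ = p := sup_eq_left.mpr hxy

theorem IsCompactElement.exists_le_maximal_not_le {Λ : Type*} [CompleteLattice Λ] {a c : Λ}
    (hc : IsCompactElement c) (hca : ¬ c ≤ a) :
    ∃ p, a ≤ p ∧ Maximal (fun x => ¬ c ≤ x) p := by
  refine zorn_le_nonempty₀ {x | ¬ c ≤ x} (fun C hC hchain y hy => ?_) a hca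
  refine ⟨sSup C, fun hc_le => ?_, fun z hz => le_sSup hz⟩
  obtain ⟨x, hxC, hcx⟩ := (isCompactElement_iff_le_of_directed_sSup_le Λ c).mp hc C
    ⟨y, hy⟩ hchain.directedOn hc_le
  exact hC hxC hcx

theorem exists_isPrimeElem_le_not_le {Λ : Type*} [Order.Frame Λ] [IsCompactlyGenerated Λ]
    {a b : Λ} (hba : ¬ b ≤ a) : ∃ p, IsPrimeElem p ∧ a ≤ p ∧ ¬ b ≤ p := by
  obtain ⟨c, hc, hcb, hca⟩ : ∃ c : Λ, IsCompactElement c ∧ c ≤ b ∧ ¬ c ≤ a := by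
    simpa [le_iff_compact_le_imp (a := b)] using hba
  obtain ⟨p, hap, hp⟩ := hc.exists_le_maximal_not_le hca
  exact ⟨p, .of_maximal_not_le hp, hap, fun hbp => hp.1 (hcb.trans hbp)⟩

theorem eq_of_forall_isPrimeElem_le_iff {Λ : Type*} [Order.Frame Λ] [IsCompactlyGenerated Λ]
    {a b : Λ} (h : ∀ p : Λ, IsPrimeElem p → (a ≤ p ↔ b ≤ p)) : a = b := by
  refine le_antisymm (not_not.mp fun hab => ?_) (not_not.mp fun hba => ?_)
  · obtain ⟨p, hp, hbp, hap⟩ := exists_isPrimeElem_le_not_le hab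
    exact hap ((h p hp).mpr hbp)
  · obtain ⟨p, hp, hap, hbp⟩ := exists_isPrimeElem_le_not_le hba
    exact hbp ((h p hp).mp hap)

theorem stmt3_general {Λ : Type*} [Order.Frame Λ] [IsCompactlyGenerated Λ] :
    (∀ a b : Λ, ¬ b ≤ a → ∃ p, IsPrimeElem p ∧ a ≤ p ∧ ¬ b ≤ p) ∧
    (∀ a b : Λ, (∀ p : Λ, IsPrimeElem p → (a ≤ p ↔ b ≤ p)) → a = b) :=
  ⟨fun _ _ => exists_isPrimeElem_le_not_le, fun _ _ => eq_of_forall_isPrimeElem_le_iff⟩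

theorem stmt3 {Λ : Type*} [Order.Frame Λ] [IsCompactlyGenerated Λ]
    (htop : IsCompactElement (⊤ : Λ))
    (hinf : ∀ a b : Λ, IsCompactElement a → IsCompactElement b → IsCompactElement (a ⊓ b)) :
    (∀ a b : Λ, ¬ b ≤ a → ∃ p, IsPrimeElem p ∧ a ≤ p ∧ ¬ b ≤ p) ∧
    (∀ a b : Λ, (∀ p : Λ, IsPrimeElem p → (a ≤ p ↔ b ≤ p)) → a = b) :=
  stmt3_general
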